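/- Let u : ℝ² → ℝ be a C² solution of the heat equation u_t = u_xx on all of ℝ², and let ε ∈ ℝ. Then the function (x,t) ↦ (1 + 4εt)^{-1/2} · exp(-εx²/(1 + 4εt)) · u(x/(1 + 4εt), t/(1 + 4εt)) is a C² solution of the heat equation on the open set {(x,t) ∈ ℝ² : 1 + 4εt > 0}. -/

import Mathlib

/-! With `A = 1 + 4εt`, differentiating `v = A^{-1/2} e^{-εx²/A} u(x/A, t/A)` once in `t` and twice
in `x` produces the same lower-order terms `(4ε²x²/A² - 2ε/A) u - (4εx/A²) u_x`, so that
`v_t - v_xx = A^{-1/2} e^{-εx²/A} A^{-2} (u_t - u_xx)(x/A, t/A)` wherever `A ≠ 0`. -/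

noncomputable def pdx (f : ℝ → ℝ → ℝ) (x t : ℝ) : ℝ := deriv (fun z => f z t) x
noncomputable def pdt (f : ℝ → ℝ → ℝ) (x t : ℝ) : ℝ := deriv (fun s => f x s) t
noncomputable def pdxx (f : ℝ → ℝ → ℝ) (x t : ℝ) : ℝ := deriv (fun z => pdx f z t) x

open Function

section PartialDerivatives

variable {f : ℝ → ℝ → ℝ}

theorem pdx_eq_fderiv {x t : ℝ} (hf : DifferentiableAt ℝ (uncurry f) (x, t)) :
    pdx f x t = fderiv ℝ (uncurry f) (x, t) (1, 0) := by
  have h := hf.hasFDerivAt.comp_hasDerivAt x ((hasDerivAt_id x).prodMk (hasDerivAt_const x t))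
  exact h.deriv

theorem pdt_eq_fderiv {x t : ℝ} (hf : DifferentiableAt ℝ (uncurry f) (x, t)) :
    pdt f x t = fderiv ℝ (uncurry f) (x, t) (0, 1) := by
  have h := hf.hasFDerivAt.comp_hasDerivAt t ((hasDerivAt_const t x).prodMk (hasDerivAt_id t))
  exact h.deriv

theorem hasDerivAt_pdx {x t : ℝ} (hf : DifferentiableAt ℝ (uncurry f) (x, t)) :
    HasDerivAt (fun z => f z t) (pdx f x t) x := by
  rw [pdx_eq_fderiv hf]
  exact hf.hasFDerivAt.comp_hasDerivAt x ((hasDerivAt_id x).prodMk (hasDerivAt_const x t))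

theorem hasDerivAt_pdx_comp_div_const {x t a : ℝ}
    (hf : DifferentiableAt ℝ (uncurry f) (x / a, t)) :
    HasDerivAt (fun z => f (z / a) t) (pdx f (x / a) t / a) x := by
  refine ((hasDerivAt_pdx hf).comp x ((hasDerivAt_id x).div_const a)).congr_deriv ?_
  simp [div_eq_mul_inv, mul_comm]

theorem DifferentiableAt.hasDerivAt_comp_prodMk {g h : ℝ → ℝ} {g' h' s : ℝ}
    (hf : DifferentiableAt ℝ (uncurry f) (g s, h s)) (hg : HasDerivAt g g' s)
    (hh : HasDerivAt h h' s) :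
    HasDerivAt (fun s => f (g s) (h s)) (g' * pdx f (g s) (h s) + h' * pdt f (g s) (h s)) s := by
  rw [pdx_eq_fderiv hf, pdt_eq_fderiv hf]
  refine (hf.hasFDerivAt.comp_hasDerivAt s (hg.prodMk hh)).congr_deriv ?_
  rw [show ((g', h') : ℝ × ℝ) = g' • (1, 0) + h' • (0, 1) by simp, map_add, map_smul, map_smul,
    smul_eq_mul, smul_eq_mul]

theorem ContDiff.uncurry_pdx {n : WithTop ℕ∞} (hf : ContDiff ℝ (n + 1) (uncurry f)) :
    ContDiff ℝ n (uncurry (pdx f)) := by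
  have hpdx : uncurry (pdx f) = fun p => fderiv ℝ (uncurry f) p (1, 0) :=
    funext fun p => pdx_eq_fderiv (hf.differentiable (by simp) p)
  rw [hpdx]
  exact (hf.fderiv_right le_rfl).clm_apply contDiff_const

end PartialDerivatives

noncomputable def heatProjective (ε : ℝ) (u : ℝ → ℝ → ℝ) (x t : ℝ) : ℝ :=
  (1 + 4 * ε * t) ^ (-(1 : ℝ) / 2) * Real.exp (-ε * x ^ 2 / (1 + 4 * ε * t)) *
    u (x / (1 + 4 * ε * t)) (t / (1 + 4 * ε * t))

section HeatProjective

variable {u : ℝ → ℝ → ℝ} {ε : ℝ}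

theorem contDiffOn_heatProjective {n : WithTop ℕ∞} (hu : ContDiff ℝ n (uncurry u)) :
    ContDiffOn ℝ n (uncurry (heatProjective ε u)) {p | 1 + 4 * ε * p.2 ≠ 0} := by
  have hA : ContDiffOn ℝ n (fun p : ℝ × ℝ => 1 + 4 * ε * p.2) {p | 1 + 4 * ε * p.2 ≠ 0} :=
    (contDiff_const.add (contDiff_const.mul contDiff_snd)).contDiffOn
  have hrescale : ContDiffOn ℝ n
      (fun p : ℝ × ℝ => (p.1 / (1 + 4 * ε * p.2), p.2 / (1 + 4 * ε * p.2)))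
      {p | 1 + 4 * ε * p.2 ≠ 0} :=
    (contDiff_fst.contDiffOn.div hA fun _ => id).prodMk (contDiff_snd.contDiffOn.div hA fun _ => id)
  refine ((hA.rpow_const_of_ne fun _ => id).mul ?_).mul (hu.comp_contDiffOn hrescale)
  exact Real.contDiff_exp.comp_contDiffOn
    ((contDiff_const.mul (contDiff_fst.pow 2)).contDiffOn.div hA fun _ => id)

theorem hasDerivAt_heatProjective_x (hu : Differentiable ℝ (uncurry u)) (x t : ℝ) :
    HasDerivAt (fun z => heatProjective ε u z t)
      ((1 + 4 * ε * t) ^ (-(1 : ℝ) / 2) * Real.exp (-ε * x ^ 2 / (1 + 4 * ε * t)) *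
        (-2 * ε * x / (1 + 4 * ε * t) * u (x / (1 + 4 * ε * t)) (t / (1 + 4 * ε * t)) +
          pdx u (x / (1 + 4 * ε * t)) (t / (1 + 4 * ε * t)) / (1 + 4 * ε * t))) x := by
  set A := 1 + 4 * ε * t
  have hexp : HasDerivAt (fun z => Real.exp (-ε * z ^ 2 / A))
      (Real.exp (-ε * x ^ 2 / A) * (-2 * ε * x / A)) x := by
    refine (((hasDerivAt_pow 2 x).const_mul (-ε)).div_const A).exp.congr_deriv ?_
    ring
  exact ((hexp.const_mul _).mul (hasDerivAt_pdx_comp_div_const (hu _))).congr_deriv (by ring)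

theorem pdxx_heatProjective (hu : ContDiff ℝ 2 (uncurry u)) (x t : ℝ) :
    pdxx (heatProjective ε u) x t =
      (1 + 4 * ε * t) ^ (-(1 : ℝ) / 2) * Real.exp (-ε * x ^ 2 / (1 + 4 * ε * t)) *
        ((4 * ε ^ 2 * x ^ 2 / (1 + 4 * ε * t) ^ 2 - 2 * ε / (1 + 4 * ε * t)) *
            u (x / (1 + 4 * ε * t)) (t / (1 + 4 * ε * t)) -
          4 * ε * x / (1 + 4 * ε * t) ^ 2 * pdx u (x / (1 + 4 * ε * t)) (t / (1 + 4 * ε * t)) +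
          pdxx u (x / (1 + 4 * ε * t)) (t / (1 + 4 * ε * t)) / (1 + 4 * ε * t) ^ 2) := by
  have hu₁ : Differentiable ℝ (uncurry u) := hu.differentiable (by norm_num)
  have hpdx₁ : Differentiable ℝ (uncurry (pdx u)) :=
    (ContDiff.uncurry_pdx (n := 1) hu).differentiable (by norm_num)
  have hpdx : (fun z => pdx (heatProjective ε u) z t) = fun z => _ :=
    funext fun z => (hasDerivAt_heatProjective_x hu₁ z t).deriv
  generalize 1 + 4 * ε * t = A at hpdx ⊢
  have hexp : HasDerivAt (fun z => A ^ (-(1 : ℝ) / 2) * Real.exp (-ε * z ^ 2 / A))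
      (A ^ (-(1 : ℝ) / 2) * (Real.exp (-ε * x ^ 2 / A) * (-2 * ε * x / A))) x := by
    refine ((((hasDerivAt_pow 2 x).const_mul (-ε)).div_const A).exp.const_mul _).congr_deriv ?_
    ring
  have hlin : HasDerivAt (fun z => -2 * ε * z / A) (-2 * ε / A) x := by
    simpa using ((hasDerivAt_id x).const_mul (-2 * ε)).div_const A
  have h := hexp.mul ((hlin.mul (hasDerivAt_pdx_comp_div_const (hu₁ (x / A, t / A)))).add
    ((hasDerivAt_pdx_comp_div_const (hpdx₁ (x / A, t / A))).div_const A))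
  rw [pdxx, hpdx, show pdxx u = pdx (pdx u) from rfl]
  refine h.deriv.trans ?_
  simp only [Pi.mul_apply, Pi.add_apply]
  ring

theorem pdt_heatProjective (hu : Differentiable ℝ (uncurry u)) {x t : ℝ}
    (ht : 1 + 4 * ε * t ≠ 0) :
    pdt (heatProjective ε u) x t =
      (1 + 4 * ε * t) ^ (-(1 : ℝ) / 2) * Real.exp (-ε * x ^ 2 / (1 + 4 * ε * t)) *
        ((4 * ε ^ 2 * x ^ 2 / (1 + 4 * ε * t) ^ 2 - 2 * ε / (1 + 4 * ε * t)) *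
            u (x / (1 + 4 * ε * t)) (t / (1 + 4 * ε * t)) -
          4 * ε * x / (1 + 4 * ε * t) ^ 2 * pdx u (x / (1 + 4 * ε * t)) (t / (1 + 4 * ε * t)) +
          pdt u (x / (1 + 4 * ε * t)) (t / (1 + 4 * ε * t)) / (1 + 4 * ε * t) ^ 2) := by
  have hA : HasDerivAt (fun s => 1 + 4 * ε * s) (4 * ε) t := by
    simpa using ((hasDerivAt_id t).const_mul (4 * ε)).const_add 1
  have hpow := hA.rpow_const (p := -(1 : ℝ) / 2) (Or.inl ht)
  have hexp := ((hasDerivAt_const t (-ε * x ^ 2)).div hA ht).exp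
  have hu_t := (hu _).hasDerivAt_comp_prodMk ((hasDerivAt_const t x).div hA ht)
    ((hasDerivAt_id t).div hA ht)
  refine ((hpow.mul hexp).mul hu_t).deriv.trans ?_
  simp only [Pi.mul_apply, Pi.div_apply, id, Real.rpow_sub_one ht]
  field_simp
  ring

theorem pdt_sub_pdxx_heatProjective (hu : ContDiff ℝ 2 (uncurry u)) {x t : ℝ}
    (ht : 1 + 4 * ε * t ≠ 0) :
    pdt (heatProjective ε u) x t - pdxx (heatProjective ε u) x t =
      (1 + 4 * ε * t) ^ (-(1 : ℝ) / 2) * Real.exp (-ε * x ^ 2 / (1 + 4 * ε * t)) /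
          (1 + 4 * ε * t) ^ 2 *
        (pdt u (x / (1 + 4 * ε * t)) (t / (1 + 4 * ε * t)) -
          pdxx u (x / (1 + 4 * ε * t)) (t / (1 + 4 * ε * t))) := by
  rw [pdt_heatProjective (hu.differentiable (by norm_num)) ht, pdxx_heatProjective hu]
  ring

end HeatProjective

theorem heat_projective_symmetry (u : ℝ → ℝ → ℝ)
    (hu : ContDiff ℝ 2 (fun p : ℝ × ℝ => u p.1 p.2))
    (heq : ∀ x t : ℝ, pdt u x t = pdxx u x t) (ε : ℝ) :
    ContDiffOn ℝ 2
      (fun p : ℝ × ℝ =>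
        (1 + 4 * ε * p.2) ^ (-(1 : ℝ) / 2) * Real.exp (-ε * p.1 ^ 2 / (1 + 4 * ε * p.2)) *
          u (p.1 / (1 + 4 * ε * p.2)) (p.2 / (1 + 4 * ε * p.2)))
      {p : ℝ × ℝ | 1 + 4 * ε * p.2 > 0} ∧
    ∀ x t : ℝ, 1 + 4 * ε * t > 0 →
      pdt (fun x t => (1 + 4 * ε * t) ^ (-(1 : ℝ) / 2) *
        Real.exp (-ε * x ^ 2 / (1 + 4 * ε * t)) *
        u (x / (1 + 4 * ε * t)) (t / (1 + 4 * ε * t))) x t =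
      pdxx (fun x t => (1 + 4 * ε * t) ^ (-(1 : ℝ) / 2) *
        Real.exp (-ε * x ^ 2 / (1 + 4 * ε * t)) *
        u (x / (1 + 4 * ε * t)) (t / (1 + 4 * ε * t))) x t := by
  refine ⟨(contDiffOn_heatProjective hu).mono fun _ hp => ne_of_gt hp, fun x t ht => ?_⟩
  have h := pdt_sub_pdxx_heatProjective (ε := ε) (x := x) hu ht.ne'
  rw [heq, sub_self, mul_zero, sub_eq_zero] at h
  exact h
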